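/- In the c-class GAMO setting, the optimal classifier value sup_M J(M) = Σ_{i=1}^c ∫ [α_i·log(α_i/(α_i+β_i)) + β_i·log(β_i/(α_i+β_i))] dμ attains its global minimum value c·( P_c·log(1/c) + (c−1)·P_c·log((c−1)/c) ) over choices of the generated densities (p_i^g) if and only if for every class i, α_i(x)/P_c = β_i(x)/((c−1)·P_c) for μ-almost every x, i.e., if and only if for every i the normalized mixture of the real and generated distributions of class i coincides μ-almost everywhere with the normalized mixture of the real and generated distributions of all other classes. -/

import Mathlib

open MeasureTheory

lemma kl_le {x y : ℝ} (hx : 0 ≤ x) (hy : 0 < y) : x - y ≤ x * Real.log (x / y) := by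
  rcases hx.eq_or_lt with h | h
  · simp [← h]; linarith
  · have h1 : Real.log (y / x) ≤ y / x - 1 := Real.log_le_sub_one_of_pos (div_pos hy h)
    have h2 : Real.log (x / y) = -Real.log (y / x) := by
      rw [← Real.log_inv, inv_div]
    rw [h2]
    have h3 := mul_le_mul_of_nonneg_left h1 h.le
    have h4 : x * (y / x - 1) = y - x := by field_simp
    nlinarith
  
lemma kl_lt {x y : ℝ} (hx : 0 ≤ x) (hy : 0 < y) (hne : x ≠ y) : x - y < x * Real.log (x / y) := by
  rcases hx.eq_or_lt with h | h
  · simp [← h]; linarith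
  · have hne' : y / x ≠ 1 := by
      intro hh; apply hne; field_simp at hh; linarith
    have h1 : Real.log (y / x) < y / x - 1 := Real.log_lt_sub_one_of_pos (div_pos hy h) hne'
    have h2 : Real.log (x / y) = -Real.log (y / x) := by
      rw [← Real.log_inv, inv_div]
    rw [h2]
    have h3 := mul_lt_mul_of_pos_left h1 h
    have h4 : x * (y / x - 1) = y - x := by field_simp
    nlinarith

lemma point (c' a b : ℝ) (hc : 2 ≤ c') (ha : 0 ≤ a) (hb : 0 ≤ b) :
    (a * Real.log (1 / c') + b * Real.log ((c' - 1) / c') ≤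
      a * Real.log (a / (a + b)) + b * Real.log (b / (a + b))) ∧
    (a * Real.log (a / (a + b)) + b * Real.log (b / (a + b)) =
      a * Real.log (1 / c') + b * Real.log ((c' - 1) / c') ↔ (c' - 1) * a = b) := by
  have hc0 : 0 < c' := by linarith
  have hc1 : 0 < c' - 1 := by linarith
  rcases eq_or_lt_of_le (by positivity : (0:ℝ) ≤ a + b) with hu | hu
  · have ha0 : a = 0 := by linarith
    have hb0 : b = 0 := by linarith
    simp [ha0, hb0]
  · -- u > 0
    set u := a + b with hu_def
    have hy1 : 0 < u / c' := by positivity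
    have hy2 : 0 < (c' - 1) * u / c' := by positivity
    -- identities
    have hA : a * Real.log (a / u) - a * Real.log (1 / c') = a * Real.log (a / (u / c')) := by
      rcases ha.eq_or_lt with h | h
      · simp [← h]
      · rw [Real.log_div h.ne' hu.ne', Real.log_div one_ne_zero hc0.ne',
          Real.log_div h.ne' hy1.ne', Real.log_div hu.ne' hc0.ne']
        simp [Real.log_one]; ring
    have hB : b * Real.log (b / u) - b * Real.log ((c' - 1) / c') =
        b * Real.log (b / ((c' - 1) * u / c')) := by
      rcases hb.eq_or_lt with h | h
      · simp [← h]
      · rw [Real.log_div h.ne' hu.ne', Real.log_div hc1.ne' hc0.ne',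
          Real.log_div h.ne' hy2.ne', Real.log_div (by positivity : ((c'-1)*u) ≠ 0) hc0.ne',
          Real.log_mul hc1.ne' hu.ne']
        ring
    have k1 := kl_le ha hy1
    have k2 := kl_le hb hy2
    have hsum : (a - u / c') + (b - (c' - 1) * u / c') = 0 := by field_simp; ring
    constructor
    · nlinarith [k1, k2]
    · constructor
      · intro heq
        by_contra hne
        have hane : a ≠ u / c' := by
          intro hh
          apply hne
          have h2 := (div_eq_iff hc0.ne').mp hh.symm
          have : u = a + b := hu_def
          nlinarith
        have k1' := kl_lt ha hy1 hane
        nlinarith [k1', k2]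
      · intro heq
        have ha' : a = u / c' := by
          field_simp [hu_def]; linarith
        have hb' : b = (c' - 1) * u / c' := by
          rw [← heq, ha']; field_simp
        have e1 : Real.log (a / u) = Real.log (1 / c') := by
          rw [ha']; congr 1; field_simp
        have e2 : Real.log (b / u) = Real.log ((c' - 1) / c') := by
          rw [hb']; congr 1; field_simp
        rw [e1, e2]

lemma integral_point {X : Type*} [MeasurableSpace X] (μ : Measure X) (c' : ℝ) (hc : 2 ≤ c')
    (a b : X → ℝ) (ha0 : ∀ x, 0 ≤ a x) (hb0 : ∀ x, 0 ≤ b x)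
    (haI : Integrable a μ) (hbI : Integrable b μ)
    (s : ℝ) (hsa : ∫ x, a x ∂μ = s) (hsb : ∫ x, b x ∂μ = (c' - 1) * s)
    (hI : Integrable (fun x => a x * Real.log (a x / (a x + b x)) +
      b x * Real.log (b x / (a x + b x))) μ) :
    (s * Real.log (1 / c') + (c' - 1) * s * Real.log ((c' - 1) / c') ≤
      ∫ x, (a x * Real.log (a x / (a x + b x)) + b x * Real.log (b x / (a x + b x))) ∂μ) ∧
    ((∫ x, (a x * Real.log (a x / (a x + b x)) + b x * Real.log (b x / (a x + b x))) ∂μ =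
      s * Real.log (1 / c') + (c' - 1) * s * Real.log ((c' - 1) / c')) ↔
      (∀ᵐ x ∂μ, (c' - 1) * a x = b x)) := by
  set L := s * Real.log (1 / c') + (c' - 1) * s * Real.log ((c' - 1) / c') with hL
  set low : X → ℝ := fun x => a x * Real.log (1 / c') + b x * Real.log ((c' - 1) / c') with hlow
  have hlowI : Integrable low μ := (haI.mul_const _).add (hbI.mul_const _)
  have hlow_int : ∫ x, low x ∂μ = L := by
    rw [hlow]
    rw [integral_add (haI.mul_const _) (hbI.mul_const _), integral_mul_const _ _, integral_mul_const _ _, hsa, hsb, hL]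
  have hpt : ∀ x, low x ≤ a x * Real.log (a x / (a x + b x)) +
      b x * Real.log (b x / (a x + b x)) :=
    fun x => (point c' (a x) (b x) hc (ha0 x) (hb0 x)).1
  have hle : L ≤ ∫ x, (a x * Real.log (a x / (a x + b x)) +
      b x * Real.log (b x / (a x + b x))) ∂μ := by
    rw [← hlow_int]
    exact integral_mono hlowI hI hpt
  refine ⟨hle, ?_, ?_⟩
  · intro heq
    have hzero : ∫ x, ((a x * Real.log (a x / (a x + b x)) +
        b x * Real.log (b x / (a x + b x))) - low x) ∂μ = 0 := by
      rw [integral_sub hI hlowI, heq, hlow_int, sub_self]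
    have hae := (integral_eq_zero_iff_of_nonneg
      (fun x => sub_nonneg.mpr (hpt x)) (hI.sub hlowI)).mp hzero
    filter_upwards [hae] with x hx
    have hx0 : a x * Real.log (a x / (a x + b x)) + b x * Real.log (b x / (a x + b x))
        = low x := by
      have : _ - low x = 0 := hx
      linarith [this]
    exact (point c' (a x) (b x) hc (ha0 x) (hb0 x)).2.mp hx0
  · intro hyp
    have hcongr : ∫ x, (a x * Real.log (a x / (a x + b x)) +
        b x * Real.log (b x / (a x + b x))) ∂μ = ∫ x, low x ∂μ := by
      apply integral_congr_ae
      filter_upwards [hyp] with x hx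
      exact (point c' (a x) (b x) hc (ha0 x) (hb0 x)).2.mpr hx
    rw [hcongr, hlow_int]
/-- In the `c`-class GAMO setting, the optimal classifier value
`sup_M J(M) = ∑ i ∫ (α i · log (α i/(α i+β i)) + β i · log (β i/(α i+β i))) dμ`
is always at least `c·(P c · log (1/c) + (c-1)·P c · log ((c-1)/c))`, and it attains
this global minimum value (over choices of the generated densities `pg`) iff for every
class `i`, `α i x / P c = β i x / ((c-1)·P c)` for μ-a.e. `x`, i.e. iff the normalized
mixture of the real and generated distributions of class `i` coincides μ-a.e. with the
normalized mixture of the real and generated distributions of all other classes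
(all integrands assumed μ-integrable; `0·log 0 = 0` via Lean's conventions). -/
theorem gamo_global_min_characterization (X : Type*) [MeasurableSpace X]
    (μ : Measure X) [SigmaFinite μ]
    (c : ℕ) (hc : 2 ≤ c)
    (P : Fin c → ℝ) (hP_pos : ∀ i, 0 < P i)
    (hP_mono : ∀ i j : Fin c, i ≤ j → P i ≤ P j)
    (hP_sum : ∑ i, P i = 1)
    (pd pg : Fin c → X → ℝ)
    (hpd_meas : ∀ i, Measurable (pd i)) (hpg_meas : ∀ i, Measurable (pg i))
    (hpd_nonneg : ∀ i x, 0 ≤ pd i x) (hpg_nonneg : ∀ i x, 0 ≤ pg i x)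
    (hpd_int : ∀ i, ∫ x, pd i x ∂μ = 1) (hpg_int : ∀ i, ∫ x, pg i x ∂μ = 1)
    (Pc : ℝ) (hPc : Pc = P ⟨c - 1, by omega⟩)
    (α β : Fin c → X → ℝ)
    (hα : ∀ i x, α i x = P i * pd i x + (Pc - P i) * pg i x)
    (hβ : ∀ i x, β i x = ∑ j ∈ Finset.univ.erase i, α j x)
    (hint : ∀ i, Integrable (fun x =>
      α i x * Real.log (α i x / (α i x + β i x)) +
        β i x * Real.log (β i x / (α i x + β i x))) μ) :
    ((c : ℝ) * (Pc * Real.log (1 / (c : ℝ)) +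
        ((c : ℝ) - 1) * Pc * Real.log (((c : ℝ) - 1) / (c : ℝ))) ≤
      ∑ i, ∫ x, (α i x * Real.log (α i x / (α i x + β i x)) +
        β i x * Real.log (β i x / (α i x + β i x))) ∂μ) ∧
    ((∑ i, ∫ x, (α i x * Real.log (α i x / (α i x + β i x)) +
          β i x * Real.log (β i x / (α i x + β i x))) ∂μ =
        (c : ℝ) * (Pc * Real.log (1 / (c : ℝ)) +
          ((c : ℝ) - 1) * Pc * Real.log (((c : ℝ) - 1) / (c : ℝ)))) ↔
      (∀ i : Fin c, ∀ᵐ x ∂μ, α i x / Pc = β i x / (((c : ℝ) - 1) * Pc))) := by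
  have hcR : (2:ℝ) ≤ (c:ℝ) := by exact_mod_cast hc
  have hc1 : (1:ℝ) < (c:ℝ) := by linarith
  have hPc_pos : 0 < Pc := hPc ▸ hP_pos _
  have hPile : ∀ i, P i ≤ Pc := by
    intro i
    rw [hPc]
    exact hP_mono i ⟨c - 1, by omega⟩ (by
      show i.val ≤ c - 1
      omega)
  have hα_nonneg : ∀ i x, 0 ≤ α i x := by
    intro i x
    rw [hα]
    have h1 := hPile i
    have h2 := hpd_nonneg i x
    have h3 := hpg_nonneg i x
    have h4 := (hP_pos i).le
    nlinarith
  have hβ_nonneg : ∀ i x, 0 ≤ β i x := by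
    intro i x
    rw [hβ]
    exact Finset.sum_nonneg fun j _ => hα_nonneg j x
  have hpd_I : ∀ i, Integrable (pd i) μ := by
    intro i
    by_contra h
    have h2 := hpd_int i
    rw [integral_undef h] at h2
    exact one_ne_zero h2.symm
  have hpg_I : ∀ i, Integrable (pg i) μ := by
    intro i
    by_contra h
    have h2 := hpg_int i
    rw [integral_undef h] at h2
    exact one_ne_zero h2.symm
  have hα_I : ∀ i, Integrable (α i) μ := by
    intro i
    have he : α i = fun x => P i * pd i x + (Pc - P i) * pg i x := funext (hα i)
    rw [he]
    exact ((hpd_I i).const_mul _).add ((hpg_I i).const_mul _)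
  have hβ_I : ∀ i, Integrable (β i) μ := by
    intro i
    have he : β i = fun x => ∑ j ∈ Finset.univ.erase i, α j x := funext (hβ i)
    rw [he]
    exact integrable_finset_sum _ fun j _ => hα_I j
  have hαint : ∀ i, ∫ x, α i x ∂μ = Pc := by
    intro i
    have he : ∫ x, α i x ∂μ = ∫ x, (P i * pd i x + (Pc - P i) * pg i x) ∂μ := by
      congr 1
      funext x
      exact hα i x
    rw [he, integral_add ((hpd_I i).const_mul _) ((hpg_I i).const_mul _),
      integral_const_mul, integral_const_mul, hpd_int i, hpg_int i]
    ring
  have hβint : ∀ i, ∫ x, β i x ∂μ = ((c:ℝ) - 1) * Pc := by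
    intro i
    have he : ∫ x, β i x ∂μ = ∫ x, (∑ j ∈ Finset.univ.erase i, α j x) ∂μ := by
      congr 1
      funext x
      exact hβ i x
    rw [he, integral_finset_sum _ fun j _ => hα_I j,
      Finset.sum_congr rfl fun j _ => hαint j, Finset.sum_const,
      Finset.card_erase_of_mem (Finset.mem_univ i), Finset.card_univ, Fintype.card_fin,
      nsmul_eq_mul]
    congr 1
    push_cast [Nat.cast_sub (by omega : 1 ≤ c)]
    ring
  have main := fun i => integral_point μ (c:ℝ) hcR (α i) (β i) (hα_nonneg i) (hβ_nonneg i)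
    (hα_I i) (hβ_I i) Pc (hαint i) (hβint i) (hint i)
  have hsumL : ∑ _i : Fin c, (Pc * Real.log (1 / (c:ℝ)) +
      ((c:ℝ) - 1) * Pc * Real.log (((c:ℝ) - 1) / (c:ℝ))) =
      (c:ℝ) * (Pc * Real.log (1 / (c:ℝ)) +
      ((c:ℝ) - 1) * Pc * Real.log (((c:ℝ) - 1) / (c:ℝ))) := by
    rw [Finset.sum_const, Finset.card_univ, Fintype.card_fin, nsmul_eq_mul]
  constructor
  · rw [← hsumL]
    exact Finset.sum_le_sum fun i _ => (main i).1
  constructor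
  · intro heq
    intro i
    have heach := (Finset.sum_eq_sum_iff_of_le (fun i (_ : i ∈ Finset.univ) => (main i).1)).mp
      (by rw [hsumL, heq]) i (Finset.mem_univ i)
    have hae := (main i).2.mp heach.symm
    filter_upwards [hae] with x hx
    rw [← hx, mul_div_mul_left _ _ (by linarith : (c:ℝ) - 1 ≠ 0)]
  · intro hyp
    have heach : ∀ i, ∫ x, (α i x * Real.log (α i x / (α i x + β i x)) +
        β i x * Real.log (β i x / (α i x + β i x))) ∂μ =
        Pc * Real.log (1 / (c:ℝ)) + ((c:ℝ) - 1) * Pc * Real.log (((c:ℝ) - 1) / (c:ℝ)) := by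
      intro i
      apply (main i).2.mpr
      filter_upwards [hyp i] with x hx
      have hx2 : α i x * (((c:ℝ) - 1) * Pc) = β i x * Pc :=
        (div_eq_div_iff hPc_pos.ne' (mul_pos (by linarith : (0:ℝ) < (c:ℝ) - 1) hPc_pos).ne').mp hx
      exact mul_right_cancel₀ hPc_pos.ne' (by linear_combination hx2)
    rw [Finset.sum_congr rfl fun i _ => heach i, hsumL]
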